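/- arXiv:2005.01242 — 3 statements merged into one kernel-verified Lean document; each statement's English description precedes it below -/
import Mathlib

section
/- Let $H_n$ be the height of a random recursive tree with $n$ nodes. Then $\mathbb{E}[H_n] \leq (e + o(1))\log n$ as $n \to \infty$. -/
/-!
Write `D_i` for the depth of node `i`. Conditioning on the parent of `i ≥ 1`, which is uniform
on `{0, …, i - 1}` and independent of the depths of the earlier nodes, gives
`E[x ^ D_i] = (x / i) ∑_{j < i} E[x ^ D_j]`, so `∑_{i ≤ n} E[x ^ D_i] = ∏_{j=1}^n (1 + x / j)`,
which is at most `exp (x · harmonic n)`. Since `e ^ H_n ≤ ∑_{i ≤ n} e ^ {D_i}`, Jensen's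
inequality gives `exp E[H_n] ≤ exp (e · harmonic n)`, that is,
`E[H_n] ≤ e · harmonic n ≤ e (1 + log n)`.
The choice `x = e` is optimal: `x = e ^ t` yields `E[H_n] ≤ (e ^ t / t) · harmonic n`.
-/

open MeasureTheory ProbabilityTheory Filter

/-- The depth of node `i` in the tree determined by the parent function `f`
(where the parent of node `i ≥ 1` is `f i < i`, and `0` is the root). -/
def treeDepth (f : ℕ → ℕ) (i : ℕ) : ℕ :=
  if h : f i < i then treeDepth f (f i) + 1 else 0
termination_by i
decreasing_by exact h

open Finset Real

theorem treeDepth_zero (f : ℕ → ℕ) : treeDepth f 0 = 0 := by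
  rw [treeDepth, dif_neg (Nat.not_lt_zero _)]

theorem treeDepth_of_lt {f : ℕ → ℕ} {i : ℕ} (h : f i < i) :
    treeDepth f i = treeDepth f (f i) + 1 := by
  rw [treeDepth, dif_pos h]

theorem treeDepth_le (f : ℕ → ℕ) (i : ℕ) : treeDepth f i ≤ i := by
  induction i using Nat.strong_induction_on with
  | _ i ih =>
    by_cases h : f i < i
    · rw [treeDepth_of_lt h]
      exact (ih _ h).trans_lt h
    · rw [treeDepth, dif_neg h]
      exact Nat.zero_le i

theorem treeDepth_congr {f g : ℕ → ℕ} {i : ℕ} (h : ∀ m ≤ i, f m = g m) :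
    treeDepth f i = treeDepth g i := by
  induction i using Nat.strong_induction_on with
  | _ i ih =>
    by_cases hf : f i < i
    · have hg : g i < i := h i le_rfl ▸ hf
      rw [treeDepth_of_lt hf, treeDepth_of_lt hg, h i le_rfl,
        ih _ hg fun m hm => h m (hm.trans hg.le)]
    · rw [treeDepth, dif_neg hf, treeDepth, dif_neg (h i le_rfl ▸ hf)]

theorem treeDepth_eq_comp_restrict {α : Type*} {n j : ℕ} (hj : j < n) (par : α → ℕ → ℕ) :
    (fun a => treeDepth (par a) j) =
      (fun y => treeDepth (Function.extend Subtype.val y 0) j) ∘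
        fun a (m : range n) => par a m :=
  funext fun a => treeDepth_congr fun m hm =>
    (Subtype.val_injective.extend_apply (fun m : range n => par a m) 0
      ⟨m, mem_range.2 (hm.trans_lt hj)⟩).symm

theorem sup_treeDepth_le (f : ℕ → ℕ) (n : ℕ) :
    ((range (n + 1)).sup fun i => treeDepth f i) ≤ n :=
  Finset.sup_le fun i hi => (treeDepth_le f i).trans (Nat.lt_succ_iff.1 (mem_range.1 hi))

theorem exp_sup_le_sum_exp {ι : Type*} {s : Finset ι} (hs : s.Nonempty) (g : ι → ℕ) :
    exp ((s.sup g : ℕ) : ℝ) ≤ ∑ i ∈ s, exp (g i : ℝ) := by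
  obtain ⟨i, hi, hsup⟩ := s.exists_mem_eq_sup hs g
  rw [hsup]
  exact single_le_sum (f := fun j => exp (g j : ℝ)) (fun j _ => (exp_pos _).le) hi

theorem prod_one_add_div_le_exp_mul_harmonic {x : ℝ} (hx : 0 ≤ x) (n : ℕ) :
    ∏ j ∈ Icc 1 n, (1 + x / j) ≤ exp (x * harmonic n) := by
  calc ∏ j ∈ Icc 1 n, (1 + x / j)
      ≤ ∏ j ∈ Icc 1 n, exp (x / j) :=
        prod_le_prod (fun j _ => by positivity) fun j _ => by linarith [add_one_le_exp (x / j)]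
    _ = exp (x * harmonic n) := by
        rw [← exp_sum, harmonic_eq_sum_Icc]
        push_cast
        rw [mul_sum]
        rfl

section RandomRecursiveTree

variable {Ω : Type*} [MeasurableSpace Ω] {μ : Measure Ω} {par : Ω → ℕ → ℕ}

structure IsRandomRecursiveTree (μ : Measure Ω) (par : Ω → ℕ → ℕ) : Prop where
  measurable_parent : ∀ i, Measurable fun ω => par ω i
  parent_lt : ∀ ω, ∀ i : ℕ, 0 < i → par ω i < i
  measure_parent_eq : ∀ i : ℕ, 0 < i → ∀ j < i, μ {ω | par ω i = j} = (i : ENNReal)⁻¹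
  iIndepFun_parent : iIndepFun (fun i ω => par ω i) μ

theorem measurable_treeDepth (hmeas : ∀ i, Measurable fun ω => par ω i) (j : ℕ) :
    Measurable fun ω => treeDepth (par ω) j := by
  rw [treeDepth_eq_comp_restrict (Nat.lt_succ_self j)]
  exact (measurable_of_countable _).comp (measurable_pi_lambda _ fun m => hmeas m)

theorem indepFun_parent_treeDepth (hmeas : ∀ i, Measurable fun ω => par ω i)
    (hindep : iIndepFun (fun i ω => par ω i) μ) {i j : ℕ} (hj : j < i) :
    IndepFun (fun ω => par ω i) (fun ω => treeDepth (par ω) j) μ := by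
  rw [treeDepth_eq_comp_restrict hj]
  exact (hindep.indepFun_finset {i} (range i) (by simp) hmeas).comp
    (φ := fun y => y ⟨i, mem_singleton_self i⟩) (measurable_of_countable _)
    (measurable_of_countable (fun y => treeDepth (Function.extend Subtype.val y 0) j))

theorem integrable_pow_treeDepth [IsFiniteMeasure μ] (hmeas : ∀ i, Measurable fun ω => par ω i)
    (x : ℝ) (j : ℕ) : Integrable (fun ω => x ^ treeDepth (par ω) j) μ := by
  refine Integrable.of_bound
    ((measurable_of_countable (x ^ ·)).comp (measurable_treeDepth hmeas j)).aestronglyMeasurable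
    (max 1 |x| ^ j) (ae_of_all _ fun ω => ?_)
  rw [norm_pow, Real.norm_eq_abs]
  calc |x| ^ treeDepth (par ω) j ≤ max 1 |x| ^ treeDepth (par ω) j :=
        pow_le_pow_left₀ (abs_nonneg x) (le_max_right 1 |x|) _
    _ ≤ max 1 |x| ^ j := pow_le_pow_right₀ (le_max_left 1 |x|) (treeDepth_le _ _)

theorem integral_ite_parent_eq_div (hmeas : ∀ i, Measurable fun ω => par ω i)
    (hunif : ∀ i : ℕ, 0 < i → ∀ j < i, μ {ω | par ω i = j} = (i : ENNReal)⁻¹)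
    {i j : ℕ} (hi : 0 < i) (hj : j < i) (x : ℝ) :
    ∫ ω, (if par ω i = j then x else 0) ∂μ = x / i := by
  have hset : MeasurableSet {ω | par ω i = j} := hmeas i (measurableSet_singleton j)
  have hind :
      (fun ω => if par ω i = j then x else 0) = {ω | par ω i = j}.indicator fun _ => x := by
    ext ω
    simp [Set.indicator_apply]
  rw [hind, integral_indicator_const x hset, measureReal_def, hunif i hi j hj, smul_eq_mul,
    ENNReal.toReal_inv, ENNReal.toReal_natCast, inv_mul_eq_div]

variable [IsProbabilityMeasure μ]

theorem integral_pow_treeDepth_of_pos (hT : IsRandomRecursiveTree μ par) (x : ℝ) {i : ℕ}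
    (hi : 0 < i) :
    ∫ ω, x ^ treeDepth (par ω) i ∂μ =
      x / i * ∑ j ∈ range i, ∫ ω, x ^ treeDepth (par ω) j ∂μ := by
  have hmeas := hT.measurable_parent
  have hsplit : (fun ω => x ^ treeDepth (par ω) i) = fun ω =>
      ∑ j ∈ range i, (if par ω i = j then x else 0) * x ^ treeDepth (par ω) j := by
    ext ω
    have hpar := hT.parent_lt ω i hi
    rw [treeDepth_of_lt hpar, pow_succ']
    simp only [ite_mul, zero_mul, sum_ite_eq, mem_range, if_pos hpar]
  have hterm : ∀ j ∈ range i,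
      ∫ ω, (if par ω i = j then x else 0) * x ^ treeDepth (par ω) j ∂μ =
        x / i * ∫ ω, x ^ treeDepth (par ω) j ∂μ := by
    intro j hj
    have hindep := indepFun_parent_treeDepth hmeas hT.iIndepFun_parent (mem_range.1 hj)
    rw [hindep.integral_fun_comp_mul_comp (f := fun k => if k = j then x else 0) (g := (x ^ ·))
      (hmeas i).aemeasurable (measurable_treeDepth hmeas j).aemeasurable
      (measurable_of_countable _).aestronglyMeasurable
      (measurable_of_countable _).aestronglyMeasurable,
      integral_ite_parent_eq_div hmeas hT.measure_parent_eq hi (mem_range.1 hj)]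
  rw [hsplit, integral_finsetSum _ fun j _ => ?_, sum_congr rfl hterm, mul_sum]
  refine (integrable_pow_treeDepth hmeas x j).bdd_mul (c := |x|)
    ((measurable_of_countable fun k => if k = j then x else 0).comp (hmeas i)).aestronglyMeasurable
    (ae_of_all _ fun ω => ?_)
  split_ifs <;> simp

theorem sum_integral_pow_treeDepth (hT : IsRandomRecursiveTree μ par) (x : ℝ) (n : ℕ) :
    ∑ i ∈ range (n + 1), ∫ ω, x ^ treeDepth (par ω) i ∂μ =
      ∏ j ∈ Icc 1 n, (1 + x / j) := by
  induction n with
  | zero => simp [treeDepth_zero]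
  | succ n ih =>
    rw [sum_range_succ, ih, integral_pow_treeDepth_of_pos hT x n.succ_pos, ih,
      prod_Icc_succ_top (Nat.le_add_left 1 n)]
    ring

theorem integral_height_le (hT : IsRandomRecursiveTree μ par) (n : ℕ) :
    ∫ ω, (((range (n + 1)).sup fun i => treeDepth (par ω) i : ℕ) : ℝ) ∂μ ≤
      exp 1 * harmonic n := by
  have hmeas := hT.measurable_parent
  set H : Ω → ℝ := fun ω => (((range (n + 1)).sup fun i => treeDepth (par ω) i : ℕ) : ℝ)
  have hH_meas : Measurable H := (measurable_of_countable Nat.cast).comp <| by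
    simpa only [sup'_eq_sup] using measurable_range_sup'' fun k _ => measurable_treeDepth hmeas k
  have hH_bound : ∀ ω, ‖H ω‖ ≤ n := fun ω => by
    rw [Real.norm_natCast]
    exact_mod_cast sup_treeDepth_le (par ω) n
  have hexpH_int : Integrable (fun ω => exp (H ω)) μ :=
    .of_bound (measurable_exp.comp hH_meas).aestronglyMeasurable (exp n) <| ae_of_all _ fun ω => by
      rw [Real.norm_of_nonneg (exp_pos _).le]
      exact exp_le_exp.2 (le_of_abs_le (hH_bound ω))
  have jensen : exp (∫ ω, H ω ∂μ) ≤ ∫ ω, exp (H ω) ∂μ :=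
    convexOn_exp.map_integral_le continuousOn_exp isClosed_univ
      (ae_of_all _ fun _ => Set.mem_univ _)
      (.of_bound hH_meas.aestronglyMeasurable _ (ae_of_all _ hH_bound)) hexpH_int
  have hsum :
      ∫ ω, exp (H ω) ∂μ ≤ ∑ i ∈ range (n + 1), ∫ ω, exp 1 ^ treeDepth (par ω) i ∂μ := by
    have hint := fun i (_ : i ∈ range (n + 1)) =>
      integrable_pow_treeDepth (μ := μ) hmeas (exp 1) i
    rw [← integral_finsetSum _ hint]
    refine integral_mono hexpH_int (integrable_finsetSum _ hint) fun ω => ?_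
    simpa only [exp_one_pow] using
      exp_sup_le_sum_exp nonempty_range_add_one fun i => treeDepth (par ω) i
  rw [sum_integral_pow_treeDepth hT] at hsum
  exact exp_le_exp.1 <|
    jensen.trans (hsum.trans (prod_one_add_div_le_exp_mul_harmonic (exp_pos 1).le n))

end RandomRecursiveTree

/-- In a random recursive tree on nodes `0,...,n` (each node `i ≥ 1` picks its parent
uniformly from `{0,...,i-1}`, independently), the expected height satisfies
`E[H_n] ≤ (e + o(1)) log n`. -/
theorem recHeight_expectation {Ω : Type*} [MeasurableSpace Ω] (μ : Measure Ω)
    [IsProbabilityMeasure μ] (par : Ω → ℕ → ℕ)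
    (hmeas : ∀ i, Measurable fun ω => par ω i)
    (hlt : ∀ ω, ∀ i : ℕ, 0 < i → par ω i < i)
    (hunif : ∀ i : ℕ, 0 < i → ∀ j < i, μ {ω | par ω i = j} = (i : ENNReal)⁻¹)
    (hindep : iIndepFun (fun i ω => par ω i) μ) :
    ∃ c : ℕ → ℝ, Tendsto c atTop (nhds 0) ∧
      ∀ n : ℕ, 2 ≤ n →
        ∫ ω, (((Finset.range (n + 1)).sup fun i => treeDepth (par ω) i : ℕ) : ℝ) ∂μ ≤
          (Real.exp 1 + c n) * Real.log n := by
  refine ⟨fun n => exp 1 / log n,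
    tendsto_const_nhds.div_atTop (tendsto_log_atTop.comp tendsto_natCast_atTop_atTop),
    fun n hn => ?_⟩
  have hlog : 0 < log n := log_pos (by exact_mod_cast hn)
  calc _ ≤ exp 1 * harmonic n := integral_height_le ⟨hmeas, hlt, hunif, hindep⟩ n
    _ ≤ exp 1 * (1 + log n) := by gcongr; exact harmonic_le_one_add_log n
    _ = (exp 1 + exp 1 / log n) * log n := by field_simp; ring
end

section
/- The series $\sum_{i=2}^\infty \left(1 - \frac{(\log i)^2}{i}\right)^{i-1}$ converges. -/
open Real

/-- `log x ≤ √x` for `x ≥ 1`. -/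
lemma my_log_le_sqrt {x : ℝ} (hx : 1 ≤ x) : Real.log x ≤ Real.sqrt x := by
  have h0 : (0:ℝ) < x := by linarith
  have hs : 0 < Real.sqrt x := Real.sqrt_pos.mpr h0
  have he : (0:ℝ) < Real.exp 1 := Real.exp_pos 1
  have h1 : Real.log (Real.sqrt x / Real.exp 1) ≤ Real.sqrt x / Real.exp 1 - 1 :=
    Real.log_le_sub_one_of_pos (by positivity)
  have h2 : Real.log (Real.sqrt x / Real.exp 1) = Real.log (Real.sqrt x) - 1 := by
    rw [Real.log_div (ne_of_gt hs) (Real.exp_ne_zero 1), Real.log_exp]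
  have h3 : Real.log (Real.sqrt x) = Real.log x / 2 := Real.log_sqrt h0.le
  have he2 : (2:ℝ) ≤ Real.exp 1 := by
    have := Real.exp_one_gt_d9
    linarith
  have h4 : Real.log x / 2 ≤ Real.sqrt x / Real.exp 1 := by linarith [h2 ▸ h1, h3]
  have h5 : Real.sqrt x / Real.exp 1 ≤ Real.sqrt x / 2 :=
    div_le_div_of_nonneg_left hs.le (by norm_num) he2
  linarith

lemma my_log_sq_le {x : ℝ} (hx : 1 ≤ x) : Real.log x ^ 2 ≤ x := by
  have h1 : Real.log x ≤ Real.sqrt x := my_log_le_sqrt hx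
  have h2 : Real.log x ^ 2 ≤ Real.sqrt x ^ 2 :=
    pow_le_pow_left₀ (Real.log_nonneg hx) h1 2
  rwa [Real.sq_sqrt (by linarith : (0:ℝ) ≤ x)] at h2

lemma my_four_le_log {x : ℝ} (hx : (60:ℝ) ≤ x) : (4:ℝ) ≤ Real.log x := by
  have h : Real.exp 4 ≤ 60 := by
    have h4 : Real.exp 4 = Real.exp 1 ^ 4 := by
      rw [← Real.exp_nat_mul]; norm_num
    have h9 := Real.exp_one_lt_d9
    have hp := (Real.exp_pos 1).le
    have : Real.exp 1 ^ 4 < 2.7182818286 ^ 4 := by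
      exact pow_lt_pow_left₀ h9 hp (by norm_num)
    rw [h4]
    nlinarith
  calc (4:ℝ) = Real.log (Real.exp 4) := (Real.log_exp 4).symm
    _ ≤ Real.log x := Real.log_le_log (Real.exp_pos 4) (le_trans h hx)

/-- The key bound: for `i ≥ 60`, `(1 - (log i)²/i)^(i-1) ≤ 1/i²`. -/
lemma my_key_bound (i : ℕ) (hi : 60 ≤ i) :
    (1 - Real.log i ^ 2 / i) ^ (i - 1) ≤ 1 / (i:ℝ) ^ 2 := by
  have hi1 : (1:ℝ) ≤ (i:ℝ) := by exact_mod_cast le_trans (by norm_num) hi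
  have hi0 : (0:ℝ) < (i:ℝ) := by linarith
  set x : ℝ := Real.log i ^ 2 / i with hxdef
  have hx0 : 0 ≤ x := by positivity
  have hx1 : x ≤ 1 := by
    rw [hxdef, div_le_one hi0]
    exact my_log_sq_le hi1
  have h1mx : 0 ≤ 1 - x := by linarith
  have hle : 1 - x ≤ Real.exp (-x) := by
    have := Real.add_one_le_exp (-x)
    linarith
  have hpow : (1 - x) ^ (i - 1) ≤ Real.exp (-x) ^ (i - 1) :=
    pow_le_pow_left₀ h1mx hle _
  have hexp : Real.exp (-x) ^ (i - 1) = Real.exp (-(((i:ℝ) - 1) * x)) := by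
    rw [← Real.exp_nat_mul]
    congr 1
    have : ((i - 1 : ℕ) : ℝ) = (i:ℝ) - 1 := by
      have : 1 ≤ i := le_trans (by norm_num) hi
      push_cast [Nat.cast_sub this]
      ring
    rw [this]; ring
  have hlog4 : (4:ℝ) ≤ Real.log i := my_four_le_log (by exact_mod_cast hi)
  have hkey : 2 * Real.log i ≤ ((i:ℝ) - 1) * x := by
    rw [hxdef]
    have hhalf : (1:ℝ)/2 ≤ ((i:ℝ) - 1) / i := by
      rw [div_le_div_iff₀ (by norm_num) hi0]
      have h2i : (2:ℝ) ≤ (i:ℝ) := by exact_mod_cast le_trans (by norm_num) hi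
      nlinarith
    have h1 : Real.log i ^ 2 / 2 ≥ 2 * Real.log i := by nlinarith
    have h2 : ((i:ℝ) - 1) * (Real.log i ^ 2 / i) = (((i:ℝ)-1)/i) * Real.log i ^ 2 := by
      ring
    rw [h2]
    have hsq : 0 ≤ Real.log i ^ 2 := sq_nonneg _
    nlinarith
  have hexple : Real.exp (-(((i:ℝ) - 1) * x)) ≤ Real.exp (-(2 * Real.log i)) :=
    Real.exp_le_exp.mpr (by linarith)
  have hfinal : Real.exp (-(2 * Real.log i)) = 1 / (i:ℝ) ^ 2 := by
    rw [Real.exp_neg]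
    congr 1
    rw [show (2:ℝ) * Real.log i = Real.log i + Real.log i by ring, Real.exp_add,
      Real.exp_log hi0]
    ring
  calc (1 - x) ^ (i - 1) ≤ Real.exp (-x) ^ (i - 1) := hpow
    _ = Real.exp (-(((i:ℝ) - 1) * x)) := hexp
    _ ≤ Real.exp (-(2 * Real.log i)) := hexple
    _ = 1 / (i:ℝ) ^ 2 := hfinal

/-- The series `∑_{i≥2} (1 - (log i)²/i)^(i-1)` converges. -/
theorem summable_one_sub_log_sq_div (f : ℕ → ℝ)
    (hf : ∀ i : ℕ, 2 ≤ i → f i = (1 - Real.log i ^ 2 / i) ^ (i - 1))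
    (hf0 : ∀ i : ℕ, i < 2 → f i = 0) :
    Summable f := by
  rw [← summable_nat_add_iff (f := f) 60]
  have hsum : Summable (fun n : ℕ => 1 / ((n + 60 : ℕ) : ℝ) ^ 2) := by
    have : Summable (fun n : ℕ => 1 / (n : ℝ) ^ 2) :=
      summable_one_div_nat_pow.mpr (by norm_num)
    exact (summable_nat_add_iff (f := fun n : ℕ => 1 / (n : ℝ) ^ 2) 60).mpr this
  refine Summable.of_nonneg_of_le (fun n => ?_) (fun n => ?_) hsum
  · rw [hf (n + 60) (by omega)]
    have hi1 : (1:ℝ) ≤ ((n + 60 : ℕ) : ℝ) := by exact_mod_cast (by omega : 1 ≤ n + 60)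
    have hx1 : Real.log ((n + 60 : ℕ) : ℝ) ^ 2 / ((n + 60 : ℕ) : ℝ) ≤ 1 := by
      rw [div_le_one (by linarith)]
      exact my_log_sq_le hi1
    exact pow_nonneg (by linarith) _
  · rw [hf (n + 60) (by omega)]
    exact my_key_bound (n + 60) (by omega)
end

section
/- Grid lemma for the RRT: Let $T$ be an RRT with step size $\epsilon$ on $[0,1]^d$, and impose a grid of axis-aligned cubes of side length $\epsilon/\sqrt{d}$. Let $S_i$ be the union of grid cells containing no tree vertex at time $i-1$. If the uniform sample $Y_i$ lies in $S_i$, then the newly added vertex $X_i$ also lies in $S_i$ (i.e., in an as-yet-unoccupied cell). Concretely: if $X_0,\ldots,X_{i-1} \in [0,1]^d$, $Y_i \in S_i$, $X_{\gamma_i}$ is the nearest of $X_0,\ldots,X_{i-1}$ to $Y_i$, and $X_i = X_{\gamma_i} + \epsilon \frac{Y_i - X_{\gamma_i}}{\|Y_i - X_{\gamma_i}\|}$ (when $\|Y_i - X_{\gamma_i}\| > \epsilon$), then $X_i$ cannot lie in a cell already containing some $X_j$, $j < i$. -/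
/-- The grid cell (in the grid of axis-aligned cubes of side `ε/√d`) containing the
point `p ∈ ℝ^d`. -/
noncomputable def gridCell (d : ℕ) (ε : ℝ) (p : EuclideanSpace ℝ (Fin d)) : Fin d → ℤ :=
  fun k => ⌊p k * Real.sqrt d / ε⌋

/-- Grid lemma for the RRT: if the uniform sample `Y` lies in a grid cell (side length
`ε/√d`) containing none of the current vertices `X_0,...,X_{i-1}`, `X γ` is the vertex
nearest to `Y` with `dist Y (X γ) > ε`, and the new vertex is
`X_i = X γ + ε (Y - X γ)/‖Y - X γ‖`, then `X_i` also lies in a cell containing no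
current vertex. -/
theorem rrt_grid_lemma (d : ℕ) (hd : 0 < d) (ε : ℝ) (hε : 0 < ε) (i : ℕ)
    (X : Fin i → EuclideanSpace ℝ (Fin d)) (Y : EuclideanSpace ℝ (Fin d)) (γ : Fin i)
    (hnear : ∀ j, dist Y (X γ) ≤ dist Y (X j))
    (hfar : ε < dist Y (X γ))
    (hY : ∀ j, gridCell d ε Y ≠ gridCell d ε (X j))
    (Xi : EuclideanSpace ℝ (Fin d))
    (hXi : Xi = X γ + (ε / dist Y (X γ)) • (Y - X γ)) :
    ∀ j, gridCell d ε Xi ≠ gridCell d ε (X j) := by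
  intro j hcell
  set r := dist Y (X γ) with hr
  have hr0 : (0:ℝ) < r := lt_trans hε hfar
  have hsd : (0:ℝ) < Real.sqrt d := Real.sqrt_pos.2 (by exact_mod_cast hd)
  -- distance from Y to the new vertex
  have hd1 : dist Y Xi = r - ε := by
    have hv : Y - Xi = (1 - ε / r) • (Y - X γ) := by
      rw [hXi]; module
    have hnn : (0:ℝ) ≤ 1 - ε / r := by
      have : ε / r < 1 := (div_lt_one hr0).2 hfar
      linarith
    rw [dist_eq_norm, hv, norm_smul, Real.norm_eq_abs, abs_of_nonneg hnn,
      ← dist_eq_norm, ← hr]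
    field_simp
  -- coordinates of points in a common cell are close
  have hcoord : ∀ k, |Xi k - X j k| < ε / Real.sqrt d := by
    intro k
    have hfl : ⌊Xi k * Real.sqrt d / ε⌋ = ⌊X j k * Real.sqrt d / ε⌋ :=
      congrFun hcell k
    have h1 : |Xi k * Real.sqrt d / ε - X j k * Real.sqrt d / ε| < 1 :=
      Int.abs_sub_lt_one_of_floor_eq_floor hfl
    have h2 : Xi k * Real.sqrt d / ε - X j k * Real.sqrt d / ε
        = (Xi k - X j k) * (Real.sqrt d / ε) := by ring
    rw [h2, abs_mul, abs_of_pos (div_pos hsd hε)] at h1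
    rw [lt_div_iff₀ hsd]
    rw [← mul_div_assoc] at h1
    exact (div_lt_one hε).1 h1
  -- hence the new vertex is within ε of X j
  have hd2 : dist Xi (X j) < ε := by
    rw [EuclideanSpace.dist_eq]
    simp only [Real.dist_eq]
    have hsum : ∑ k, (Xi k - X j k) ^ 2 < ε ^ 2 := by
      have hlt : ∀ k ∈ (Finset.univ : Finset (Fin d)),
          (Xi k - X j k) ^ 2 < (ε / Real.sqrt d) ^ 2 := by
        intro k _
        have := hcoord k
        calc (Xi k - X j k) ^ 2 = |Xi k - X j k| ^ 2 := (sq_abs _).symm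
          _ < (ε / Real.sqrt d) ^ 2 := by
              apply pow_lt_pow_left₀ this (abs_nonneg _) (by norm_num)
      calc ∑ k, (Xi k - X j k) ^ 2
          < ∑ _k : Fin d, (ε / Real.sqrt d) ^ 2 :=
            Finset.sum_lt_sum_of_nonempty (by have : Nonempty (Fin d) := Fin.pos_iff_nonempty.1 hd; exact Finset.univ_nonempty) hlt
        _ = d * (ε / Real.sqrt d) ^ 2 := by
            rw [Finset.sum_const]; simp [mul_comm]
        _ = ε ^ 2 := by
            rw [div_pow, Real.sq_sqrt (by exact_mod_cast hd.le)]
            field_simp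
    have : Real.sqrt (∑ k, (Xi k - X j k) ^ 2) < Real.sqrt (ε ^ 2) :=
      Real.sqrt_lt_sqrt (Finset.sum_nonneg fun k _ => sq_nonneg _) hsum
    simpa [Real.sqrt_sq hε.le] using this
  -- contradiction with minimality of X γ
  have : dist Y (X j) < r :=
    calc dist Y (X j) ≤ dist Y Xi + dist Xi (X j) := dist_triangle _ _ _
      _ < (r - ε) + ε := by rw [hd1]; exact by gcongr
      _ = r := by ring
  exact absurd (hnear j) (not_le.2 this)
end
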